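/- For p ∈ (1,∞), μ ≥ 0, and any n×n real matrices A, B, there exists a constant C = C(n,p) > 0 independent of μ such that ((μ + |A|²)^((p-2)/2) A − (μ + |B|²)^((p-2)/2) B) : (A − B) ≥ C (μ + |A|² + |B|²)^((p-2)/2) |A − B|², where : denotes the Frobenius inner product of matrices and |·| the Frobenius norm. -/

import Mathlib

open scoped BigOperators

/-- Squared Frobenius norm of a matrix. -/
noncomputable def frobSq {n : ℕ} (A : Matrix (Fin n) (Fin n) ℝ) : ℝ :=
  ∑ i, ∑ j, (A i j) ^ 2

/-- Frobenius inner product of two matrices. -/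
noncomputable def frobInner {n : ℕ} (A B : Matrix (Fin n) (Fin n) ℝ) : ℝ :=
  ∑ i, ∑ j, A i j * B i j

/-!
Put `q = (p - 2) / 2`. Flattening matrices identifies the Frobenius structure with the Euclidean
one on `ℝ^(n × n)`, so it suffices to work in a real inner product space, where for
`s = (μ + ‖x‖²)^q`, `t = (μ + ‖y‖²)^q`
`2 ⟪s x - t y, x - y⟫ = (s - t) (‖x‖² - ‖y‖²) + (s + t) ‖x - y‖²`.
By symmetry let `‖y‖ ≤ ‖x‖`. If `q ≥ 0` the first term is nonnegative and
`s ≥ ((μ + ‖x‖² + ‖y‖²) / 2)^q`. If `q < 0` the first term is negative; it is absorbed using the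
mean value theorem for `ρ ↦ ρ (μ + ρ²)^q`, whose derivative on `[‖y‖, ‖x‖]` is at least
`(1 + 2q) s = (p - 1) s`.
-/

open scoped RealInnerProductSpace

theorem hasDerivAt_mul_rpow_add_sq {μ q y : ℝ} (hy : 0 < μ + y ^ 2) :
    HasDerivAt (fun y => y * (μ + y ^ 2) ^ q)
      ((μ + y ^ 2) ^ (q - 1) * (μ + (1 + 2 * q) * y ^ 2)) y := by
  refine ((hasDerivAt_id' y).mul (((hasDerivAt_pow 2 y).const_add μ).rpow_const
    (p := q) (Or.inl hy.ne'))).congr_deriv ?_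
  rw [Real.rpow_sub_one hy.ne']
  field_simp
  ring

theorem one_add_two_mul_mul_sub_le_mul_rpow_add_sq_sub {μ q ρ r : ℝ} (hμ : 0 ≤ μ) (hq : q ≤ 0)
    (hq' : 0 ≤ 1 + 2 * q) (hρ : 0 < μ + ρ ^ 2) (hρ₀ : 0 ≤ ρ) (hρr : ρ ≤ r) :
    (1 + 2 * q) * (μ + r ^ 2) ^ q * (r - ρ) ≤ r * (μ + r ^ 2) ^ q - ρ * (μ + ρ ^ 2) ^ q := by
  have hpos : ∀ y ∈ Set.Icc ρ r, 0 < μ + y ^ 2 := fun y hy => by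
    nlinarith [hy.1]
  have hderiv := fun y hy => hasDerivAt_mul_rpow_add_sq (q := q) (hpos y hy)
  refine (convex_Icc ρ r).mul_sub_le_image_sub_of_le_deriv
    (fun y hy => (hderiv y hy).continuousAt.continuousWithinAt)
    (fun y hy => (hderiv y (interior_subset hy)).differentiableAt.differentiableWithinAt)
    (fun y hy => ?_) ρ (Set.left_mem_Icc.2 hρr) r (Set.right_mem_Icc.2 hρr) hρr
  rw [interior_Icc] at hy
  have hy' := hpos y (Set.Ioo_subset_Icc_self hy)
  rw [(hderiv y (Set.Ioo_subset_Icc_self hy)).deriv]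
  calc (1 + 2 * q) * (μ + r ^ 2) ^ q
      ≤ (1 + 2 * q) * (μ + y ^ 2) ^ q := by
        gcongr ?_ * ?_
        exact Real.rpow_le_rpow_of_nonpos hy' (by nlinarith [hy.1, hy.2]) hq
    _ = (μ + y ^ 2) ^ (q - 1) * ((1 + 2 * q) * (μ + y ^ 2)) := by
        rw [Real.rpow_sub_one hy'.ne']; field_simp
    _ ≤ (μ + y ^ 2) ^ (q - 1) * (μ + (1 + 2 * q) * y ^ 2) := by
        gcongr; nlinarith

noncomputable def powField {E : Type*} [NormedAddCommGroup E] [InnerProductSpace ℝ E]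
    (μ q : ℝ) (x : E) : E :=
  (μ + ‖x‖ ^ 2) ^ q • x

section InnerProductSpace

variable {E : Type*} [NormedAddCommGroup E] [InnerProductSpace ℝ E]

theorem two_mul_inner_smul_sub_smul (s t : ℝ) (x y : E) :
    2 * ⟪s • x - t • y, x - y⟫ = (s - t) * (‖x‖ ^ 2 - ‖y‖ ^ 2) + (s + t) * ‖x - y‖ ^ 2 := by
  rw [norm_sub_sq_real]
  simp only [inner_sub_left, inner_sub_right, real_inner_smul_left, real_inner_self_eq_norm_sq,
    real_inner_comm x y]
  ring

theorem le_inner_powField_sub_of_nonneg {μ q : ℝ} (hμ : 0 ≤ μ) (hq : 0 ≤ q) {x y : E}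
    (hyx : ‖y‖ ≤ ‖x‖) :
    (2 ^ (q + 1))⁻¹ * (μ + ‖x‖ ^ 2 + ‖y‖ ^ 2) ^ q * ‖x - y‖ ^ 2 ≤
      ⟪powField μ q x - powField μ q y, x - y⟫ := by
  have hsq : ‖y‖ ^ 2 ≤ ‖x‖ ^ 2 := by gcongr
  have hts : (μ + ‖y‖ ^ 2) ^ q ≤ (μ + ‖x‖ ^ 2) ^ q := by gcongr
  have hM : (μ + ‖x‖ ^ 2 + ‖y‖ ^ 2) ^ q / 2 ^ q ≤ (μ + ‖x‖ ^ 2) ^ q := by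
    rw [← Real.div_rpow (by positivity) zero_le_two]
    gcongr
    linarith
  have hexp := two_mul_inner_smul_sub_smul ((μ + ‖x‖ ^ 2) ^ q) ((μ + ‖y‖ ^ 2) ^ q) x y
  have ht : 0 ≤ (μ + ‖y‖ ^ 2) ^ q := by positivity
  have hC : (2 ^ (q + 1))⁻¹ * (μ + ‖x‖ ^ 2 + ‖y‖ ^ 2) ^ q =
      (μ + ‖x‖ ^ 2 + ‖y‖ ^ 2) ^ q / 2 ^ q / 2 := by
    rw [Real.rpow_add_one two_ne_zero]; field_simp
  rw [hC]
  unfold powField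
  linarith [mul_le_mul_of_nonneg_right hM (sq_nonneg ‖x - y‖),
    mul_nonneg (sub_nonneg.2 hts) (sub_nonneg.2 hsq), mul_nonneg ht (sq_nonneg ‖x - y‖)]

theorem le_inner_powField_sub_of_nonpos {μ q : ℝ} (hμ : 0 ≤ μ) (hq : q ≤ 0)
    (hq' : 0 ≤ 1 + 2 * q) {x y : E} (hyx : ‖y‖ ≤ ‖x‖) :
    (1 + 2 * q) * (μ + ‖x‖ ^ 2 + ‖y‖ ^ 2) ^ q * ‖x - y‖ ^ 2 ≤
      ⟪powField μ q x - powField μ q y, x - y⟫ := by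
  rcases (add_nonneg hμ (sq_nonneg ‖y‖)).eq_or_lt with hy | hy
  · have hy2 : ‖y‖ ^ 2 = 0 := by linarith [sq_nonneg ‖y‖]
    obtain rfl : μ = 0 := by linarith
    obtain rfl : y = 0 := norm_eq_zero.1 (pow_eq_zero_iff two_ne_zero |>.1 hy2)
    have hs : 0 ≤ (‖x‖ ^ 2) ^ q := by positivity
    simp only [powField, norm_zero, sub_zero, smul_zero, zero_add, ne_eq, OfNat.ofNat_ne_zero,
      not_false_eq_true, zero_pow, add_zero, real_inner_smul_left, real_inner_self_eq_norm_sq]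
    nlinarith [mul_nonneg hs (sq_nonneg ‖x‖)]
  have hsq : ‖y‖ ^ 2 ≤ ‖x‖ ^ 2 := by gcongr
  have hx : 0 < μ + ‖x‖ ^ 2 := by linarith
  have hmvt := one_add_two_mul_mul_sub_le_mul_rpow_add_sq_sub hμ hq hq' hy (norm_nonneg y) hyx
  have hMs : (μ + ‖x‖ ^ 2 + ‖y‖ ^ 2) ^ q ≤ (μ + ‖x‖ ^ 2) ^ q :=
    Real.rpow_le_rpow_of_nonpos hx (by linarith [sq_nonneg ‖y‖]) hq
  have hst : (μ + ‖x‖ ^ 2) ^ q ≤ (μ + ‖y‖ ^ 2) ^ q :=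
    Real.rpow_le_rpow_of_nonpos hy (by linarith) hq
  have hexp := two_mul_inner_smul_sub_smul ((μ + ‖x‖ ^ 2) ^ q) ((μ + ‖y‖ ^ 2) ^ q) x y
  unfold powField
  set s := (μ + ‖x‖ ^ 2) ^ q
  set t := (μ + ‖y‖ ^ 2) ^ q
  have hs : 0 ≤ s := by positivity
  have he : (‖x‖ - ‖y‖) ^ 2 ≤ ‖x - y‖ ^ 2 :=
    pow_le_pow_left₀ (sub_nonneg.2 hyx) (norm_sub_norm_le x y) 2
  have hcross : (t - s) * (‖x‖ ^ 2 - ‖y‖ ^ 2) ≤ (t + s - 2 * (1 + 2 * q) * s) * ‖x - y‖ ^ 2 :=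
    calc (t - s) * (‖x‖ ^ 2 - ‖y‖ ^ 2)
        = (t - s) * (‖x‖ - ‖y‖) ^ 2 + 2 * (‖x‖ - ‖y‖) * (‖y‖ * (t - s)) := by ring
      _ ≤ (t - s) * (‖x‖ - ‖y‖) ^ 2 + 2 * (‖x‖ - ‖y‖) * (-2 * q * s * (‖x‖ - ‖y‖)) := by
        gcongr (t - s) * (‖x‖ - ‖y‖) ^ 2 + 2 * (‖x‖ - ‖y‖) * ?_
        linarith -- this is `hmvt` rearranged
      _ = (t + s - 2 * (1 + 2 * q) * s) * (‖x‖ - ‖y‖) ^ 2 := by ring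
      _ ≤ (t + s - 2 * (1 + 2 * q) * s) * ‖x - y‖ ^ 2 := by gcongr; nlinarith
  linarith [mul_le_mul_of_nonneg_left (mul_le_mul_of_nonneg_right hMs (sq_nonneg ‖x - y‖)) hq']

theorem le_inner_powField_sub_of_forall_norm_le {C μ q : ℝ}
    (h : ∀ x y : E, ‖y‖ ≤ ‖x‖ → C * (μ + ‖x‖ ^ 2 + ‖y‖ ^ 2) ^ q * ‖x - y‖ ^ 2 ≤
      ⟪powField μ q x - powField μ q y, x - y⟫) (x y : E) :
    C * (μ + ‖x‖ ^ 2 + ‖y‖ ^ 2) ^ q * ‖x - y‖ ^ 2 ≤ ⟪powField μ q x - powField μ q y, x - y⟫ := by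
  rcases le_total ‖y‖ ‖x‖ with hyx | hxy
  · exact h x y hyx
  · have h' := h y x hxy
    rwa [add_right_comm, norm_sub_rev, ← inner_neg_neg, neg_sub, neg_sub] at h'

theorem exists_pos_mul_rpow_mul_norm_sub_sq_le_inner_powField_sub {q : ℝ} (hq : 0 < 1 + 2 * q) :
    ∃ C : ℝ, 0 < C ∧ ∀ μ : ℝ, 0 ≤ μ → ∀ x y : E,
      C * (μ + ‖x‖ ^ 2 + ‖y‖ ^ 2) ^ q * ‖x - y‖ ^ 2 ≤
        ⟪powField μ q x - powField μ q y, x - y⟫ := by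
  rcases le_total 0 q with hq₀ | hq₀
  · exact ⟨(2 ^ (q + 1))⁻¹, by positivity, fun μ hμ => le_inner_powField_sub_of_forall_norm_le
      fun _ _ => le_inner_powField_sub_of_nonneg hμ hq₀⟩
  · exact ⟨1 + 2 * q, hq, fun μ hμ => le_inner_powField_sub_of_forall_norm_le
      fun _ _ => le_inner_powField_sub_of_nonpos hμ hq₀ hq.le⟩

end InnerProductSpace

def frobVec {m n : Type*} : Matrix m n ℝ →ₗ[ℝ] EuclideanSpace ℝ (m × n) where
  toFun A := WithLp.toLp 2 fun ij => A ij.1 ij.2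
  map_add' _ _ := rfl
  map_smul' _ _ := rfl

@[simp]
theorem frobVec_apply {m n : Type*} (A : Matrix m n ℝ) (ij : m × n) : frobVec A ij = A ij.1 ij.2 :=
  rfl

theorem frobInner_eq_inner {n : ℕ} (A B : Matrix (Fin n) (Fin n) ℝ) :
    frobInner A B = ⟪frobVec A, frobVec B⟫ := by
  simp [frobInner, PiLp.inner_apply, Fintype.sum_prod_type, mul_comm]

theorem frobSq_eq_norm_sq {n : ℕ} (A : Matrix (Fin n) (Fin n) ℝ) :
    frobSq A = ‖frobVec A‖ ^ 2 := by
  rw [← real_inner_self_eq_norm_sq, ← frobInner_eq_inner]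
  simp only [frobSq, frobInner, sq]

/-- Monotonicity inequality for the p-Laplacean operator: for `p ∈ (1,∞)` there is a
constant `C = C(n,p) > 0`, independent of `μ ≥ 0`, such that for all matrices `A, B`,
`((μ+|A|²)^((p-2)/2) A − (μ+|B|²)^((p-2)/2) B) : (A−B) ≥ C (μ+|A|²+|B|²)^((p-2)/2) |A−B|²`. -/
theorem stmt0 (n : ℕ) (p : ℝ) (hp : 1 < p) :
    ∃ C : ℝ, 0 < C ∧ ∀ μ : ℝ, 0 ≤ μ → ∀ A B : Matrix (Fin n) (Fin n) ℝ,
      C * (μ + frobSq A + frobSq B) ^ ((p - 2) / 2) * frobSq (A - B) ≤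
        frobInner ((μ + frobSq A) ^ ((p - 2) / 2) • A - (μ + frobSq B) ^ ((p - 2) / 2) • B)
          (A - B) := by
  obtain ⟨C, hC, h⟩ := exists_pos_mul_rpow_mul_norm_sub_sq_le_inner_powField_sub
    (E := EuclideanSpace ℝ (Fin n × Fin n)) (q := (p - 2) / 2) (by linarith)
  refine ⟨C, hC, fun μ hμ A B => ?_⟩
  simpa only [powField, frobSq_eq_norm_sq, frobInner_eq_inner, map_sub, map_smul]
    using h μ hμ (frobVec A) (frobVec B)
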